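/- Let Λ be a nonempty compact topological space and U : Λ × Λ → ℝ symmetric and lower semicontinuous, with ground state energies E_g(N). Suppose E : ℕ → ℝ is a sequence of 'experimental' energies satisfying E(M) ≥ E_g(M) for all M ≥ 2 (each experimental value is the energy of some configuration, hence an upper bound). If for some N ≥ 2 and n ≥ 1 one has E(N+n)/((N+n)(N+n-1)) < E(N)/(N(N-1)), then E(N) > E_g(N) strictly; i.e., E(N) is not the true ground state energy. -/

import Mathlib

/-- The total pairwise energy of a configuration of `N` points. -/
noncomputable def energy {Λ : Type*} (N : ℕ) (U : Λ → Λ → ℝ) (q : Fin N → Λ) : ℝ :=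
  ∑ i : Fin N, ∑ j ∈ Finset.Ioi i, U (q i) (q j)

/-- The ground state energy of `N` points in `Λ`. -/
noncomputable def Eg (Λ : Type*) (N : ℕ) (U : Λ → Λ → ℝ) : ℝ :=
  sInf (Set.range (energy (Λ := Λ) N U))

/-!
Deleting one point of an `(N + 1)`-point configuration leaves an `N`-point configuration, and
summing over the deleted point counts every pair exactly `N - 1` times. Hence
`(N + 1) E_g(N) ≤ (N - 1) E_g(N + 1)`, i.e. `ε_g(N) ≤ ε_g(N + 1)`, and so
`ε_g(N) ≤ ε_g(N + n) ≤ E(N + n) / ((N + n)(N + n - 1)) < E(N) / (N (N - 1))`.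
-/

open Finset

namespace Fin

theorem sum_sum_Ioi_eq_sum_filter_lt {M : Type*} [AddCommMonoid M] {n : ℕ}
    (f : Fin n → Fin n → M) :
    ∑ i, ∑ j ∈ Ioi i, f i j =
      ∑ p ∈ univ.filter (fun p : Fin n × Fin n => p.1 < p.2), f p.1 p.2 := by
  rw [sum_filter, ← univ_product_univ, sum_product]
  refine sum_congr rfl fun i _ => ?_
  rw [← sum_filter, filter_lt_eq_Ioi]

theorem image_succAbove_filter_lt {n : ℕ} (k : Fin (n + 1)) :
    (univ.filter (fun p : Fin n × Fin n => p.1 < p.2)).image (Prod.map k.succAbove k.succAbove) =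
      univ.filter (fun p : Fin (n + 1) × Fin (n + 1) => p.1 < p.2 ∧ p.1 ≠ k ∧ p.2 ≠ k) := by
  ext ⟨a, b⟩
  simp only [mem_image, mem_filter, mem_univ, true_and, Prod.exists, Prod.map_apply, Prod.mk.injEq]
  constructor
  · rintro ⟨i, j, hij, rfl, rfl⟩
    exact ⟨succAbove_lt_succAbove_iff.2 hij, succAbove_ne k i, succAbove_ne k j⟩
  · rintro ⟨hab, ha, hb⟩
    obtain ⟨i, rfl⟩ := exists_succAbove_eq ha
    obtain ⟨j, rfl⟩ := exists_succAbove_eq hb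
    exact ⟨i, j, succAbove_lt_succAbove_iff.1 hab, rfl, rfl⟩

theorem sum_succAbove_sum_Ioi {M : Type*} [AddCommMonoid M] (n : ℕ)
    (f : Fin (n + 1) → Fin (n + 1) → M) :
    ∑ k : Fin (n + 1), ∑ i : Fin n, ∑ j ∈ Ioi i, f (k.succAbove i) (k.succAbove j) =
      (n - 1) • ∑ i, ∑ j ∈ Ioi i, f i j := by
  have h_remove (k : Fin (n + 1)) : ∑ i : Fin n, ∑ j ∈ Ioi i, f (k.succAbove i) (k.succAbove j) =
      ∑ p ∈ univ.filter (fun p : Fin (n + 1) × Fin (n + 1) => p.1 < p.2 ∧ p.1 ≠ k ∧ p.2 ≠ k),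
        f p.1 p.2 := by
    rw [sum_sum_Ioi_eq_sum_filter_lt, ← image_succAbove_filter_lt, sum_image]
    · rfl
    · exact (succAbove_right_injective.prodMap succAbove_right_injective).injOn
  have h_count {a b : Fin (n + 1)} (hab : a < b) :
      #(univ.filter fun k => a ≠ k ∧ b ≠ k) = n - 1 := by
    rw [show univ.filter (fun k => a ≠ k ∧ b ≠ k) = {a, b}ᶜ by ext; simp [eq_comm],
      card_compl, card_pair hab.ne, Fintype.card_fin]
    rfl
  simp_rw [h_remove, sum_sum_Ioi_eq_sum_filter_lt, smul_sum, ← filter_filter]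
  rw [sum_comm' (t' := univ.filter fun p : Fin (n + 1) × Fin (n + 1) => p.1 < p.2)
    (s' := fun p => univ.filter fun k => p.1 ≠ k ∧ p.2 ≠ k)
    (by intro k p; simp only [mem_filter, mem_univ, true_and]; tauto)]
  refine sum_congr rfl fun p hp => ?_
  rw [Finset.sum_const, h_count (mem_filter.1 hp).2]

end Fin

section GroundState

variable {Λ : Type*} {U : Λ → Λ → ℝ}

theorem sum_energy_comp_succAbove (N : ℕ) (q : Fin (N + 1) → Λ) :
    ∑ k : Fin (N + 1), energy N U (q ∘ k.succAbove) = (N - 1 : ℕ) • energy (N + 1) U q :=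
  Fin.sum_succAbove_sum_Ioi N fun a b => U (q a) (q b)

variable [TopologicalSpace Λ] [CompactSpace Λ]

theorem bddBelow_range_energy (hU : LowerSemicontinuous fun p : Λ × Λ => U p.1 p.2) (N : ℕ) :
    BddBelow (Set.range (energy N U)) := by
  obtain ⟨c, hc⟩ := (hU.lowerSemicontinuousOn Set.univ).bddBelow_of_isCompact isCompact_univ
  refine ⟨∑ i : Fin N, ∑ j ∈ Ioi i, c, ?_⟩
  rintro _ ⟨q, rfl⟩
  exact sum_le_sum fun i _ => sum_le_sum fun j _ => hc ⟨(q i, q j), Set.mem_univ _, rfl⟩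

theorem Eg_le_energy (hU : LowerSemicontinuous fun p : Λ × Λ => U p.1 p.2) {N : ℕ}
    (q : Fin N → Λ) : Eg Λ N U ≤ energy N U q :=
  csInf_le (bddBelow_range_energy hU N) ⟨q, rfl⟩

/-- The pair-specific ground state energy `ε_g(N)`. -/
noncomputable def pairEg (Λ : Type*) (N : ℕ) (U : Λ → Λ → ℝ) : ℝ :=
  Eg Λ N U / (N * (N - 1))

variable [Nonempty Λ]

theorem pairEg_le_pairEg_succ (hU : LowerSemicontinuous fun p : Λ × Λ => U p.1 p.2) {N : ℕ}
    (hN : 2 ≤ N) : pairEg Λ N U ≤ pairEg Λ (N + 1) U := by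
  have hN' : (2 : ℝ) ≤ N := by exact_mod_cast hN
  have h_energy (q : Fin (N + 1) → Λ) : Eg Λ N U * (N + 1) / (N - 1) ≤ energy (N + 1) U q := by
    rw [div_le_iff₀ (by linarith)]
    calc Eg Λ N U * (N + 1) = ∑ _k : Fin (N + 1), Eg Λ N U := by simp [mul_comm]
      _ ≤ ∑ k : Fin (N + 1), energy N U (q ∘ k.succAbove) :=
        sum_le_sum fun k _ => Eg_le_energy hU _
      _ = energy (N + 1) U q * (N - 1) := by
        rw [sum_energy_comp_succAbove, nsmul_eq_mul, Nat.cast_sub (by omega), Nat.cast_one,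
          mul_comm]
  have h_Eg : Eg Λ N U * (N + 1) / (N - 1) ≤ Eg Λ (N + 1) U :=
    le_csInf (Set.range_nonempty _) (Set.forall_mem_range.2 h_energy)
  calc pairEg Λ N U = Eg Λ N U * (N + 1) / (N - 1) / ((N + 1) * N) := by
        unfold pairEg
        field_simp
    _ ≤ pairEg Λ (N + 1) U := by
        unfold pairEg
        push_cast
        rw [add_sub_cancel_right]
        gcongr

theorem pairEg_monotoneOn (hU : LowerSemicontinuous fun p : Λ × Λ => U p.1 p.2) :
    MonotoneOn (fun N => pairEg Λ N U) (Set.Ici 2) :=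
  monotoneOn_nat_Ici_of_le_succ fun _ hN => pairEg_le_pairEg_succ hU hN

end GroundState

theorem monotonicity_test_failure_general {Λ : Type*} [TopologicalSpace Λ] [CompactSpace Λ]
    [Nonempty Λ] (U : Λ → Λ → ℝ)
    (hlsc : LowerSemicontinuous (fun p : Λ × Λ => U p.1 p.2))
    (E : ℕ → ℝ) (hE : ∀ M, 2 ≤ M → E M ≥ Eg Λ M U)
    (N n : ℕ) (hN : 2 ≤ N)
    (hfail : E (N + n) / (((N : ℝ) + n) * ((N : ℝ) + n - 1)) <
      E N / ((N : ℝ) * ((N : ℝ) - 1))) :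
    E N > Eg Λ N U := by
  have hN' : (2 : ℝ) ≤ N := by exact_mod_cast hN
  have h_mono : pairEg Λ N U ≤ pairEg Λ (N + n) U :=
    pairEg_monotoneOn hlsc hN (show 2 ≤ N + n by omega) (by omega)
  have h_bound : pairEg Λ (N + n) U ≤ E (N + n) / (((N : ℝ) + n) * ((N : ℝ) + n - 1)) := by
    unfold pairEg
    push_cast
    gcongr
    · have : (0 : ℝ) ≤ n := n.cast_nonneg
      nlinarith
    · exact hE _ (by omega)
  have h_pair : pairEg Λ N U < E N / (N * (N - 1)) := (h_mono.trans h_bound).trans_lt hfail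
  exact (div_lt_div_iff_of_pos_right (by nlinarith)).1 h_pair

/-- if experimental energies `E(M) ≥ E_g(M)` fail a pair-specific
monotonicity test, i.e. `E(N+n)/((N+n)(N+n-1)) < E(N)/(N(N-1))`, then `E(N) > E_g(N)`
strictly. -/
theorem monotonicity_test_failure {Λ : Type*} [TopologicalSpace Λ] [CompactSpace Λ]
    [Nonempty Λ] (U : Λ → Λ → ℝ) (hsym : ∀ x y, U x y = U y x)
    (hlsc : LowerSemicontinuous (fun p : Λ × Λ => U p.1 p.2))
    (E : ℕ → ℝ) (hE : ∀ M, 2 ≤ M → E M ≥ Eg Λ M U)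
    (N n : ℕ) (hN : 2 ≤ N) (hn : 1 ≤ n)
    (hfail : E (N + n) / (((N : ℝ) + n) * ((N : ℝ) + n - 1)) <
      E N / ((N : ℝ) * ((N : ℝ) - 1))) :
    E N > Eg Λ N U :=
  monotonicity_test_failure_general U hlsc E hE N n hN hfail
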